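/- The directional (smoothed) zeroth-order gradient estimator is unbiased for the Gaussian-smoothed objective: for L : ℝ^P → ℝ measurable with suitable integrability and u ∼ N(0, I_P), the estimator ĝ = ((L(θ + h u) − L(θ))/h) · u satisfies E_u[ĝ] = ∇_θ L_h(θ), where L_h(θ) = E_u[L(θ + h u)]. -/

import Mathlib

open MeasureTheory Real Filter ProbabilityTheory Set Topology
open scoped NNReal ENNReal

noncomputable section
set_option maxHeartbeats 1000000

local notation "φ" => gaussianPDFReal 0 1

lemma phi_eq (t : ℝ) : φ t = (√(2 * π))⁻¹ * rexp (-t ^ 2 / 2) := by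
  simp [gaussianPDFReal]

lemma phi_pos (t : ℝ) : 0 < φ t := gaussianPDFReal_pos 0 1 t one_ne_zero

lemma hasDerivAt_phi (t : ℝ) : HasDerivAt φ (-t * φ t) t := by
  have h1 : HasDerivAt (fun t : ℝ => (√(2 * π))⁻¹ * rexp (-t ^ 2 / 2))
      ((√(2 * π))⁻¹ * (rexp (-t ^ 2 / 2) * (-(2 * t ^ 1) / 2))) t := by
    exact (((hasDerivAt_pow 2 t).neg.div_const 2).exp).const_mul _
  have h2 : HasDerivAt (fun t : ℝ => (√(2 * π))⁻¹ * rexp (-t ^ 2 / 2))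
      (-t * φ t) t := by
    convert h1 using 1
    rw [phi_eq]; ring
  refine h2.congr_of_eventuallyEq ?_
  filter_upwards with x using phi_eq x

lemma integrable_phi : Integrable φ := integrable_gaussianPDFReal 0 1

lemma integrable_abs_mul_phi : Integrable (fun t => |t| * φ t) := by
  have h := (integrable_rpow_mul_exp_neg_mul_sq (by norm_num : (0:ℝ) < 1/2)
    (by norm_num : (-1:ℝ) < 1)).abs
  have h2 : Integrable (fun t : ℝ => |t| * rexp (-(1/2) * t ^ 2)) := by
    refine h.congr ?_
    filter_upwards with x
    rw [rpow_one, abs_mul, abs_of_nonneg (exp_pos _).le]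
  refine (h2.const_mul ((√(2 * π))⁻¹)).congr ?_
  filter_upwards with x
  rw [phi_eq]; ring_nf

lemma integrable_sq_mul_phi : Integrable (fun t => t ^ 2 * φ t) := by
  have h := integrable_rpow_mul_exp_neg_mul_sq (by norm_num : (0:ℝ) < 1/2)
    (by norm_num : (-1:ℝ) < 2)
  have h2 : Integrable (fun t : ℝ => t ^ 2 * rexp (-(1/2) * t ^ 2)) := by
    refine h.congr ?_
    filter_upwards with x
    rw [show ((2:ℝ) : ℝ) = ((2:ℕ) : ℝ) by norm_num, rpow_natCast]
  refine (h2.const_mul ((√(2 * π))⁻¹)).congr ?_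
  filter_upwards with x
  rw [phi_eq]; ring_nf

-- whole-line FTC
lemma integral_deriv_eq_zero_of_tendsto (f f' : ℝ → ℝ) (hd : ∀ x, HasDerivAt f (f' x) x)
    (hi : Integrable f') (ht : Tendsto f atTop (𝓝 0)) (hb : Tendsto f atBot (𝓝 0)) :
    ∫ x, f' x = 0 := by
  have h1 : ∫ x in Iic (0:ℝ), f' x = f 0 - 0 :=
    integral_Iic_of_hasDerivAt_of_tendsto' (fun x _ => hd x) hi.integrableOn hb
  have h2 : ∫ x in Ioi (0:ℝ), f' x = 0 - f 0 :=
    integral_Ioi_of_hasDerivAt_of_tendsto' (fun x _ => hd x) hi.integrableOn ht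
  rw [← intervalIntegral.integral_Iic_add_Ioi (b := (0:ℝ)) hi.integrableOn hi.integrableOn, h1, h2]
  ring

lemma tendsto_linear_mul_phi_atTop (a K : ℝ) (ha : 0 ≤ a) (hK : 0 ≤ K) :
    Tendsto (fun t => (a + K * |t|) * φ t) atTop (𝓝 0) := by
  set c := (√(2 * π))⁻¹ with hc
  have hc0 : 0 ≤ c := by positivity
  have hhalf : Tendsto (fun t : ℝ => t / 2) atTop atTop :=
    tendsto_id.atTop_div_const (by norm_num)
  have h1 : Tendsto (fun t : ℝ => rexp (-(t / 2))) atTop (𝓝 0) :=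
    tendsto_exp_neg_atTop_nhds_zero.comp hhalf
  have h2 : Tendsto (fun t : ℝ => (t / 2) ^ 1 * rexp (-(t / 2))) atTop (𝓝 0) :=
    (tendsto_pow_mul_exp_neg_atTop_nhds_zero 1).comp hhalf
  have hD : Tendsto (fun t : ℝ => c * (a * rexp (-(t / 2))
      + K * (2 * ((t / 2) ^ 1 * rexp (-(t / 2)))))) atTop (𝓝 0) := by
    have := ((h1.const_mul a).add ((h2.const_mul 2).const_mul K)).const_mul c
    simpa using this
  apply squeeze_zero' (by filter_upwards with t using mul_nonneg (by positivity) (phi_pos t).le) _ hD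
  filter_upwards [eventually_ge_atTop (1:ℝ), eventually_ge_atTop (0:ℝ)] with t h1t h0t
  have habs : |t| = t := abs_of_nonneg h0t
  have hexp : rexp (-t ^ 2 / 2) ≤ rexp (-(t / 2)) := by
    apply exp_le_exp.2; nlinarith
  have hA : 0 ≤ a + K * |t| := by positivity
  rw [phi_eq, habs, ← hc]
  calc (a + K * t) * (c * rexp (-t ^ 2 / 2))
      ≤ (a + K * t) * (c * rexp (-(t / 2))) := by
        apply mul_le_mul_of_nonneg_left (by nlinarith [exp_pos (-(t/2)), exp_pos (-t^2/2)]) (habs ▸ hA)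
    _ = c * (a * rexp (-(t / 2)) + K * (2 * ((t / 2) ^ 1 * rexp (-(t / 2))))) := by ring

lemma tendsto_linear_mul_phi_atBot (a K : ℝ) (ha : 0 ≤ a) (hK : 0 ≤ K) :
    Tendsto (fun t => (a + K * |t|) * φ t) atBot (𝓝 0) := by
  have := (tendsto_linear_mul_phi_atTop a K ha hK).comp tendsto_neg_atBot_atTop
  refine this.congr fun t => ?_
  simp [phi_eq, abs_neg, neg_sq, Function.comp]

lemma integral_gaussianReal_eq (F : ℝ → ℝ) :
    ∫ t, F t ∂(gaussianReal 0 1) = ∫ t, φ t * F t := by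
  rw [gaussianReal_of_var_ne_zero 0 one_ne_zero]
  have : (gaussianPDF 0 1) = fun x => ((Real.toNNReal (φ x) : ℝ≥0) : ℝ≥0∞) := rfl
  rw [this, integral_withDensity_eq_integral_smul (measurable_gaussianPDFReal 0 1).real_toNNReal]
  congr 1
  ext t
  simp [NNReal.smul_def, Real.coe_toNNReal _ (phi_pos t).le]

lemma stein1d (g g' : ℝ → ℝ) (K : ℝ) (hd : ∀ t, HasDerivAt g (g' t) t)
    (hb : ∀ t, |g' t| ≤ K) :
    ∫ t, g t * t ∂(gaussianReal 0 1) = ∫ t, g' t ∂(gaussianReal 0 1) := by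
  have hK : 0 ≤ K := le_trans (abs_nonneg _) (hb 0)
  have hlin : ∀ t, |g t| ≤ |g 0| + K * |t| := by
    intro t
    have h := Convex.norm_image_sub_le_of_norm_hasDerivWithin_le
      (f := g) (f' := g') (fun x _ => (hd x).hasDerivWithinAt)
      (fun x _ => hb x) convex_univ (Set.mem_univ 0) (Set.mem_univ t)
    simp only [Real.norm_eq_abs, sub_zero] at h
    calc |g t| = |g t - g 0 + g 0| := by ring_nf
      _ ≤ |g t - g 0| + |g 0| := abs_add_le _ _
      _ ≤ K * |t| + |g 0| := by linarith
      _ = |g 0| + K * |t| := by ring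
  have gcont : Continuous g := by
    rw [continuous_iff_continuousAt]; exact fun t => (hd t).continuousAt
  have g'meas : Measurable g' := by
    have : g' = deriv g := funext fun t => ((hd t).deriv).symm
    rw [this]; exact measurable_deriv g
  have hφm := measurable_gaussianPDFReal 0 1
  -- integrability of the two derivative pieces
  have i1 : Integrable (fun t => g' t * φ t) := by
    refine (integrable_phi.const_mul K).mono'
      ((g'meas.mul hφm).aestronglyMeasurable) ?_
    filter_upwards with t
    rw [Real.norm_eq_abs, abs_mul, abs_of_nonneg (phi_pos t).le]
    exact mul_le_mul_of_nonneg_right (hb t) (phi_pos t).le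
  have i2 : Integrable (fun t => g t * (-t * φ t)) := by
    refine ((integrable_abs_mul_phi.const_mul |g 0|).add
      (integrable_sq_mul_phi.const_mul K)).mono'
      ((gcont.measurable.mul (measurable_id.neg.mul hφm)).aestronglyMeasurable) ?_
    filter_upwards with t
    rw [Real.norm_eq_abs, abs_mul, abs_mul, abs_neg, abs_of_nonneg (phi_pos t).le]
    have h1 : 0 ≤ |t| * φ t := mul_nonneg (abs_nonneg t) (phi_pos t).le
    have h2 : |g t| * (|t| * φ t) ≤ (|g 0| + K * |t|) * (|t| * φ t) :=
      mul_le_mul_of_nonneg_right (hlin t) h1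
    have h3 : |t| * |t| = t ^ 2 := by rw [← abs_mul, ← sq, abs_sq]
    calc |g t| * (|t| * φ t) ≤ (|g 0| + K * |t|) * (|t| * φ t) := h2
      _ = |g 0| * (|t| * φ t) + K * ((|t| * |t|) * φ t) := by ring
      _ = |g 0| * (|t| * φ t) + K * (t ^ 2 * φ t) := by rw [h3]
  -- limits of g * φ at ±∞
  have hbound : ∀ t, ‖g t * φ t‖ ≤ (|g 0| + K * |t|) * φ t := by
    intro t
    rw [Real.norm_eq_abs, abs_mul, abs_of_nonneg (phi_pos t).le]
    exact mul_le_mul_of_nonneg_right (hlin t) (phi_pos t).le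
  have htop : Tendsto (fun t => g t * φ t) atTop (𝓝 0) :=
    squeeze_zero_norm hbound (tendsto_linear_mul_phi_atTop _ _ (abs_nonneg _) hK)
  have hbot : Tendsto (fun t => g t * φ t) atBot (𝓝 0) :=
    squeeze_zero_norm hbound (tendsto_linear_mul_phi_atBot _ _ (abs_nonneg _) hK)
  have key : ∫ t, (g' t * φ t + g t * (-t * φ t)) = 0 :=
    integral_deriv_eq_zero_of_tendsto (fun t => g t * φ t) _
      (fun t => (hd t).mul (hasDerivAt_phi t)) (i1.add i2) htop hbot
  rw [integral_add i1 i2] at key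
  rw [integral_gaussianReal_eq, integral_gaussianReal_eq]
  have e1 : ∫ t, φ t * (g t * t) = - ∫ t, g t * (-t * φ t) := by
    rw [← integral_neg]; congr 1; ext t; ring
  have e2 : ∫ t, φ t * g' t = ∫ t, g' t * φ t := by
    congr 1; ext t; ring
  rw [e1, e2]; linarith

lemma insertNth_affine {n : ℕ} (i : Fin (n + 1)) (y : Fin n → ℝ) (t : ℝ) :
    i.insertNth t y = (i.insertNth (0:ℝ) y : Fin (n+1) → ℝ) + t • (Pi.single i 1 : Fin (n+1) → ℝ) := by
  funext j
  refine Fin.succAboveCases i ?_ ?_ j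
  · simp
  · intro k
    simp [Pi.single_eq_of_ne (i.succAbove_ne k)]

lemma steinPi {n : ℕ} (G : (Fin (n + 1) → ℝ) → ℝ)
    (G' : (Fin (n + 1) → ℝ) → (Fin (n + 1) → ℝ) →L[ℝ] ℝ)
    (K : ℝ) (hd : ∀ x, HasFDerivAt G (G' x) x) (hbK : ∀ x, ‖G' x‖ ≤ K)
    (i : Fin (n + 1))
    (hint : Integrable (fun x => G x * x i) (Measure.pi fun _ => gaussianReal 0 1)) :
    ∫ x, G x * x i ∂(Measure.pi fun _ => gaussianReal 0 1)
      = ∫ x, G' x (Pi.single i 1) ∂(Measure.pi fun _ => gaussianReal 0 1) := by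
  set π1 : Measure (Fin (n + 1) → ℝ) := Measure.pi fun _ => gaussianReal 0 1 with hπ1
  set π' : Measure (Fin n → ℝ) := Measure.pi fun _ => gaussianReal 0 1 with hπ'
  set e := MeasurableEquiv.piFinSuccAbove (fun _ : Fin (n + 1) => ℝ) i with he
  have mp : MeasurePreserving e π1 ((gaussianReal 0 1).prod π') :=
    measurePreserving_piFinSuccAbove (fun _ => gaussianReal 0 1) i
  have mpsymm := mp.symm e
  have hemb := MeasurableEquiv.measurableEmbedding e.symm
  -- G' is the fderiv, hence measurable in x
  have hG' : G' = fderiv ℝ G := funext fun x => ((hd x).fderiv).symm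
  have hG'meas : Measurable fun x => G' x (Pi.single i 1) := by
    rw [hG']; exact measurable_fderiv_apply_const ℝ G _
  have hGcont : Continuous G := by
    rw [continuous_iff_continuousAt]; exact fun x => (hd x).continuousAt
  -- the curve derivative data
  have hcurve : ∀ (y : Fin n → ℝ) (t : ℝ),
      HasDerivAt (fun s => i.insertNth s y) (Pi.single i 1 : Fin (n + 1) → ℝ) t := by
    intro y t
    have h1 : HasDerivAt (fun s : ℝ => i.insertNth 0 y + s • (Pi.single i 1 : Fin (n + 1) → ℝ))
        ((1 : ℝ) • (Pi.single i 1 : Fin (n + 1) → ℝ)) t :=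
      ((hasDerivAt_id t).smul_const _).const_add _
    rw [one_smul] at h1
    refine h1.congr_of_eventuallyEq ?_
    filter_upwards with s using insertNth_affine i y s
  have hdg : ∀ (y : Fin n → ℝ) (t : ℝ),
      HasDerivAt (fun s => G (i.insertNth s y)) (G' (i.insertNth t y) (Pi.single i 1)) t :=
    fun y t => (hd _).comp_hasDerivAt t (hcurve y t)
  have hbg : ∀ (y : Fin n → ℝ) (t : ℝ),
      |G' (i.insertNth t y) (Pi.single i 1)| ≤ K * ‖(Pi.single i 1 : Fin (n + 1) → ℝ)‖ := by
    intro y t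
    calc |G' (i.insertNth t y) (Pi.single i 1)|
        ≤ ‖G' (i.insertNth t y)‖ * ‖(Pi.single i 1 : Fin (n + 1) → ℝ)‖ :=
          (G' (i.insertNth t y)).le_opNorm _
      _ ≤ K * ‖(Pi.single i 1 : Fin (n + 1) → ℝ)‖ :=
          mul_le_mul_of_nonneg_right (hbK _) (norm_nonneg _)
  -- integrability of the RHS integrand on π1
  have hK0 : 0 ≤ K := le_trans (norm_nonneg _) (hbK 0)
  have hintR : Integrable (fun x => G' x (Pi.single i 1)) π1 := by
    refine (integrable_const (K * ‖(Pi.single i 1 : Fin (n + 1) → ℝ)‖)).mono'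
      hG'meas.aestronglyMeasurable ?_
    filter_upwards with x
    calc ‖G' x (Pi.single i 1)‖ ≤ ‖G' x‖ * ‖(Pi.single i 1 : Fin (n + 1) → ℝ)‖ :=
        (G' x).le_opNorm _
      _ ≤ K * ‖(Pi.single i 1 : Fin (n + 1) → ℝ)‖ :=
        mul_le_mul_of_nonneg_right (hbK _) (norm_nonneg _)
  -- transfer to the product measure
  have hLcomp : Integrable (fun z : ℝ × (Fin n → ℝ) => G (i.insertNth z.1 z.2) * z.1)
      ((gaussianReal 0 1).prod π') := by
    have := (mpsymm.integrable_comp_emb hemb).2 hint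
    refine this.congr ?_
    filter_upwards with z
    simp [e, Fin.insertNthEquiv, Function.comp]
  have hRcomp : Integrable (fun z : ℝ × (Fin n → ℝ) => G' (i.insertNth z.1 z.2) (Pi.single i 1))
      ((gaussianReal 0 1).prod π') := by
    have := (mpsymm.integrable_comp_emb hemb).2 hintR
    refine this.congr ?_
    filter_upwards with z
    simp [e, Fin.insertNthEquiv, Function.comp]
  have hL : ∫ x, G x * x i ∂π1
      = ∫ y, ∫ t, G (i.insertNth t y) * t ∂(gaussianReal 0 1) ∂π' := by
    rw [← mpsymm.integral_comp hemb (fun x => G x * x i)]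
    have : ∀ z : ℝ × (Fin n → ℝ),
        G (e.symm z) * (e.symm z) i = G (i.insertNth z.1 z.2) * z.1 := by
      intro z; simp [e, Fin.insertNthEquiv]
    rw [integral_congr_ae (Filter.Eventually.of_forall this)]
    exact integral_prod_symm _ hLcomp
  have hR : ∫ x, G' x (Pi.single i 1) ∂π1
      = ∫ y, ∫ t, G' (i.insertNth t y) (Pi.single i 1) ∂(gaussianReal 0 1) ∂π' := by
    rw [← mpsymm.integral_comp hemb (fun x => G' x (Pi.single i 1))]
    have : ∀ z : ℝ × (Fin n → ℝ),
        G' (e.symm z) (Pi.single i 1) = G' (i.insertNth z.1 z.2) (Pi.single i 1) := by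
      intro z; simp [e, Fin.insertNthEquiv]
    rw [integral_congr_ae (Filter.Eventually.of_forall this)]
    exact integral_prod_symm _ hRcomp
  rw [hL, hR]
  congr 1
  funext y
  exact stein1d _ _ (K * ‖(Pi.single i 1 : Fin (n + 1) → ℝ)‖) (hdg y) (hbg y)

/-- The directional (smoothed) zeroth-order gradient estimator is unbiased for the
Gaussian-smoothed objective: for `u ∼ N(0, I_P)`,
`E_u[((L(θ + h u) − L(θ))/h) • u] = ∇ L_h(θ)` where `L_h(θ) = E_u[L(θ + h u)]`. -/
theorem zeroth_order_estimator_unbiased {P : ℕ} (h : ℝ) (hh : 0 < h)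
    (L : EuclideanSpace ℝ (Fin P) → ℝ)
    (hL : Differentiable ℝ L) (C : ℝ) (hgrad : ∀ x, ‖gradient L x‖ ≤ C)
    (ν : Measure (EuclideanSpace ℝ (Fin P)))
    (hν : ν = (Measure.pi fun _ : Fin P => ProbabilityTheory.gaussianReal 0 1).map
      (⇑(EuclideanSpace.equiv (Fin P) ℝ).symm))
    (θ : EuclideanSpace ℝ (Fin P))
    (hint : ∀ θ' : EuclideanSpace ℝ (Fin P), Integrable (fun u => L (θ' + h • u)) ν)
    (hint2 : Integrable
      (fun u : EuclideanSpace ℝ (Fin P) => ((L (θ + h • u) - L θ) / h) • u) ν) :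
    ∫ u, ((L (θ + h • u) - L θ) / h) • u ∂ν
      = gradient (fun θ' => ∫ u, L (θ' + h • u) ∂ν) θ := by
  cases P with
  | zero => exact Subsingleton.elim _ _
  | succ n =>
  have hφe_meas : Measurable (⇑(EuclideanSpace.equiv (Fin (n + 1)) ℝ).symm) :=
    (EuclideanSpace.equiv (Fin (n + 1)) ℝ).symm.continuous.measurable
  have hνprob : IsProbabilityMeasure ν := by
    rw [hν]; exact Measure.isProbabilityMeasure_map hφe_meas.aemeasurable
  have hC0 : 0 ≤ C := (norm_nonneg _).trans (hgrad 0)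
  have hgradeq : ∀ x, fderiv ℝ L x
      = (InnerProductSpace.toDual ℝ (EuclideanSpace ℝ (Fin (n + 1)))) (gradient L x) := by
    intro x
    rw [show gradient L x
      = (InnerProductSpace.toDual ℝ (EuclideanSpace ℝ (Fin (n + 1)))).symm (fderiv ℝ L x)
      from rfl, LinearIsometryEquiv.apply_symm_apply]
  have hfd : ∀ x, ‖fderiv ℝ L x‖ ≤ C := by
    intro x; rw [hgradeq x, LinearIsometryEquiv.norm_map]; exact hgrad x
  have hmap : Measurable fun u : EuclideanSpace ℝ (Fin (n + 1)) => θ + h • u :=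
    (continuous_const.add (continuous_id.const_smul h)).measurable
  have hmeasF' : Measurable (fun u : EuclideanSpace ℝ (Fin (n + 1)) =>
      fderiv ℝ L (θ + h • u)) := (measurable_fderiv ℝ L).comp hmap
  have hintF' : Integrable (fun u => fderiv ℝ L (θ + h • u)) ν := by
    refine (integrable_const C).mono' hmeasF'.aestronglyMeasurable ?_
    filter_upwards with u using hfd _
  -- differentiation under the integral sign
  have hFd : HasFDerivAt (fun θ' => ∫ u, L (θ' + h • u) ∂ν)
      (∫ u, fderiv ℝ L (θ + h • u) ∂ν) θ := by
    apply hasFDerivAt_integral_of_dominated_of_fderiv_le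
      (F' := fun x u => fderiv ℝ L (x + h • u)) (bound := fun _ => C) (Metric.ball_mem_nhds θ one_pos)
    · filter_upwards with x
      exact (hL.continuous.comp
        (continuous_const.add (continuous_id.const_smul h))).aestronglyMeasurable
    · exact hint θ
    · exact hmeasF'.aestronglyMeasurable
    · filter_upwards with u x _ using hfd _
    · exact integrable_const C
    · filter_upwards with u x _
      have hA : HasFDerivAt (fun x : EuclideanSpace ℝ (Fin (n + 1)) => x + h • u)
          (ContinuousLinearMap.id ℝ _) x := (hasFDerivAt_id x).add_const (h • u)
      have := ((hL (x + h • u)).hasFDerivAt.comp x hA)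
      simpa [Function.comp_def] using this
  -- identify the gradient
  have hgradF : gradient (fun θ' => ∫ u, L (θ' + h • u) ∂ν) θ
      = (InnerProductSpace.toDual ℝ (EuclideanSpace ℝ (Fin (n + 1)))).symm
        (∫ u, fderiv ℝ L (θ + h • u) ∂ν) := hFd.hasGradientAt.gradient
  rw [hgradF]
  -- componentwise comparison
  apply PiLp.ext
  intro i
  -- left side coordinate
  have hint2i : Integrable
      (fun u : EuclideanSpace ℝ (Fin (n + 1)) => ((L (θ + h • u) - L θ) / h) * u i) ν := by
    have := (EuclideanSpace.proj (𝕜 := ℝ) i).integrable_comp hint2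
    refine this.congr ?_
    filter_upwards with u
    simp
  have hLcoord : (∫ u, ((L (θ + h • u) - L θ) / h) • u ∂ν) i
      = ∫ u, ((L (θ + h • u) - L θ) / h) * u i ∂ν := by
    calc (∫ u, ((L (θ + h • u) - L θ) / h) • u ∂ν) i
        = (EuclideanSpace.proj (𝕜 := ℝ) i)
            (∫ u, ((L (θ + h • u) - L θ) / h) • u ∂ν) := rfl
      _ = ∫ u, (EuclideanSpace.proj (𝕜 := ℝ) i)
            (((L (θ + h • u) - L θ) / h) • u) ∂ν :=
          ((EuclideanSpace.proj (𝕜 := ℝ) i).integral_comp_comm hint2).symm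
      _ = ∫ u, ((L (θ + h • u) - L θ) / h) * u i ∂ν := by
          congr 1
  -- right side coordinate
  have hRcoord : ((InnerProductSpace.toDual ℝ (EuclideanSpace ℝ (Fin (n + 1)))).symm
      (∫ u, fderiv ℝ L (θ + h • u) ∂ν)) i
      = ∫ u, fderiv ℝ L (θ + h • u) (EuclideanSpace.single i 1) ∂ν := by
    rw [← ContinuousLinearMap.integral_apply hintF']
    rw [← InnerProductSpace.toDual_symm_apply (𝕜 := ℝ)
      (y := ∫ u, fderiv ℝ L (θ + h • u) ∂ν) (x := EuclideanSpace.single i 1)]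
    rw [real_inner_comm, EuclideanSpace.inner_single_left]
    simp
  rw [hLcoord, hRcoord]
  -- transfer both integrals to the product Gaussian measure
  set φe : (Fin (n + 1) → ℝ) → EuclideanSpace ℝ (Fin (n + 1)) :=
    ⇑(EuclideanSpace.equiv (Fin (n + 1)) ℝ).symm with hφedef
  have hmeas1 : Measurable (fun u : EuclideanSpace ℝ (Fin (n + 1)) =>
      ((L (θ + h • u) - L θ) / h) * u i) := by
    exact (((hL.continuous.comp
      (continuous_const.add (continuous_id.const_smul h))).sub continuous_const).div_const h).measurable.mul
      ((EuclideanSpace.proj (𝕜 := ℝ) i).continuous.measurable)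
  have hmeas2 : Measurable (fun u : EuclideanSpace ℝ (Fin (n + 1)) =>
      fderiv ℝ L (θ + h • u) (EuclideanSpace.single i 1)) :=
    (ContinuousLinearMap.measurable_apply _).comp hmeasF'
  rw [hν, integral_map hφe_meas.aemeasurable (by
    rw [← hν]; exact hmeas1.aestronglyMeasurable),
    integral_map hφe_meas.aemeasurable (by
    rw [← hν]; exact hmeas2.aestronglyMeasurable)]
  -- set up Stein's lemma data
  set B : (Fin (n + 1) → ℝ) →L[ℝ] EuclideanSpace ℝ (Fin (n + 1)) :=
    ((EuclideanSpace.equiv (Fin (n + 1)) ℝ).symm :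
      (Fin (n + 1) → ℝ) →L[ℝ] EuclideanSpace ℝ (Fin (n + 1))) with hBdef
  have hdG : ∀ x, HasFDerivAt (fun x => (L (θ + h • φe x) - L θ) / h)
      ((fderiv ℝ L (θ + h • φe x)).comp B) x := by
    intro x
    have hAff : HasFDerivAt (fun x : Fin (n + 1) → ℝ => θ + h • φe x) (h • B) x := by
      have h1 : HasFDerivAt (fun x : Fin (n + 1) → ℝ => h • φe x) (h • B) x :=
        (h • B).hasFDerivAt
      exact h1.const_add θ
    have h2 := ((hL (θ + h • φe x)).hasFDerivAt.comp x hAff)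
    have h3 := (h2.sub_const (L θ)).const_mul (1 / h)
    have h4 : HasFDerivAt (fun x => (1 / h) * (L (θ + h • φe x) - L θ))
        ((1 / h) • ((fderiv ℝ L (θ + h • φe x)).comp (h • B))) x := by
      simpa [Function.comp] using h3
    have h5 : (1 / h) • ((fderiv ℝ L (θ + h • φe x)).comp (h • B))
        = (fderiv ℝ L (θ + h • φe x)).comp B := by
      ext v
      simp [smul_smul, one_div, inv_mul_cancel₀ hh.ne']
    rw [h5] at h4
    refine h4.congr_of_eventuallyEq ?_
    filter_upwards with z
    show (L (θ + h • φe z) - L θ) / h = 1 / h * (L (θ + h • φe z) - L θ)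
    ring
  have hbG : ∀ x, ‖(fderiv ℝ L (θ + h • φe x)).comp B‖ ≤ C * ‖B‖ := fun x =>
    (ContinuousLinearMap.opNorm_comp_le _ _).trans
      (mul_le_mul_of_nonneg_right (hfd _) (norm_nonneg _))
  have hintG : Integrable (fun x => ((L (θ + h • φe x) - L θ) / h) * x i)
      (Measure.pi fun _ : Fin (n + 1) => gaussianReal 0 1) := by
    rw [hν] at hint2i
    exact (integrable_map_measure (by
      rw [← hν]; exact hmeas1.aestronglyMeasurable) hφe_meas.aemeasurable).1 hint2i
  have hstein := steinPi (fun x => (L (θ + h • φe x) - L θ) / h)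
    (fun x => (fderiv ℝ L (θ + h • φe x)).comp B) (C * ‖B‖) hdG hbG i hintG
  exact hstein
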